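/- For every n ≥ 1, R^{(n)}(X) = −r^{(n)}(X − ε₆) as polynomials in ℂ[X], where ε₆ = (1 + i√3)/2 is a primitive 6th root of unity and R^{(n)}(X) := Σ_{i=0}^{n−1} (X − i√3)^{n−1−i}·X^i. -/
import Mathlib


open Polynomial

/-- h(i) = 0, -1, -1, 0, 1, 1 according as i = 0,1,2,3,4,5 (mod 6). -/
def hcoef (i : ℕ) : ℤ :=
  match i % 6 with
  | 0 => 0 | 1 => -1 | 2 => -1 | 3 => 0 | 4 => 1 | _ => 1

/-- g(i) = 1, -m, -m-1, -1, m, m+1 according as i = 0,1,2,3,4,5 (mod 6). -/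
def gcoef (m : ℚ) (i : ℕ) : ℚ :=
  match i % 6 with
  | 0 => 1 | 1 => -m | 2 => -m - 1 | 3 => -1 | 4 => m | _ => m + 1

/-- f_m^{(n)}(X) = sum_{i=0}^n C(n,i) X^i g(n-i). -/
noncomputable def fpol (m : ℚ) (n : ℕ) : ℚ[X] :=
  ∑ i ∈ Finset.range (n + 1), C ((n.choose i : ℚ) * gcoef m (n - i)) * X ^ i

/-- r^{(n)}(X) = sum_{i=0}^n C(n,i) X^i h(n-i). -/
noncomputable def rpol (n : ℕ) : ℤ[X] :=
  ∑ i ∈ Finset.range (n + 1), C ((n.choose i : ℤ) * hcoef (n - i)) * X ^ i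

/-- R^{(n)}(X) = sum_{i=0}^{n-1} (X - i√3)^{n-1-i} X^i in ℂ[X]. -/
noncomputable def Rpol (n : ℕ) : ℂ[X] :=
  ∑ i ∈ Finset.range n, (X - C (Complex.I * (Real.sqrt 3 : ℂ))) ^ (n - 1 - i) * X ^ i

lemma hkey_gen (u : ℂ) (hu : u ^ 2 = -3) (k : ℕ) :
    (hcoef k : ℂ) * u = ((1 - u)/2) ^ k - ((1 + u)/2) ^ k := by
  have e6 : ((1 + u)/2) ^ 6 = 1 := by
    field_simp
    linear_combination (u^4 + 6*u^3 + 12*u^2 + 2*u - 21) * hu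
  have eb6 : ((1 - u)/2) ^ 6 = 1 := by
    field_simp
    linear_combination (u^4 - 6*u^3 + 12*u^2 - 2*u - 21) * hu
  have hpe : ((1 + u)/2) ^ k = ((1 + u)/2) ^ (k % 6) := by
    conv_lhs => rw [← Nat.div_add_mod k 6]
    rw [pow_add, pow_mul, e6, one_pow, one_mul]
  have hpb : ((1 - u)/2) ^ k = ((1 - u)/2) ^ (k % 6) := by
    conv_lhs => rw [← Nat.div_add_mod k 6]
    rw [pow_add, pow_mul, eb6, one_pow, one_mul]
  rw [hpe, hpb]
  have h6 : k % 6 = 0 ∨ k % 6 = 1 ∨ k % 6 = 2 ∨ k % 6 = 3 ∨ k % 6 = 4 ∨ k % 6 = 5 := by omega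
  rcases h6 with h|h|h|h|h|h <;> simp only [hcoef, h] <;> push_cast
  · ring
  · ring
  · ring
  · linear_combination (u/4) * hu
  · linear_combination (u/2) * hu
  · linear_combination (u*(u^2+7)/16) * hu

lemma rcomp_gen (s e eb : ℂ) (heb : e - eb = s)
    (hk : ∀ k : ℕ, (hcoef k : ℂ) * s = eb ^ k - e ^ k) (n : ℕ) :
    ((rpol n).map (Int.castRingHom ℂ)).comp (X - C e) * C s = (X - C s) ^ n - X ^ n := by
  rw [rpol, Polynomial.map_sum, Polynomial.sum_comp, Finset.sum_mul]
  have hterm : ∀ i ∈ Finset.range (n + 1),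
      ((C ((n.choose i : ℤ) * hcoef (n - i)) * X ^ i).map (Int.castRingHom ℂ)).comp (X - C e) * C s
      = (X - C e) ^ i * (C eb) ^ (n - i) * (n.choose i : ℂ[X])
        - (X - C e) ^ i * (C e) ^ (n - i) * (n.choose i : ℂ[X]) := by
    intro i _
    rw [Polynomial.map_mul, Polynomial.map_C, Polynomial.map_pow, Polynomial.map_X,
      mul_comp, C_comp, pow_comp, X_comp]
    have hsplit : (C ((Int.castRingHom ℂ) ((n.choose i : ℤ) * hcoef (n - i))) : ℂ[X])
        = C (n.choose i : ℂ) * C ((hcoef (n - i) : ℂ)) := by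
      rw [← map_mul]; congr 1
      simp only [map_mul, map_natCast, eq_intCast]
    rw [hsplit]
    have hnc : ((C (n.choose i : ℂ)) : ℂ[X]) = ((n.choose i : ℕ) : ℂ[X]) :=
      Polynomial.C_eq_natCast _
    calc C (n.choose i : ℂ) * C ((hcoef (n - i) : ℂ)) * (X - C e) ^ i * C s
        = C ((hcoef (n - i) : ℂ) * s) * ((X - C e) ^ i * C (n.choose i : ℂ)) := by
          rw [map_mul]; ring
      _ = (C (eb ^ (n - i)) - C (e ^ (n - i))) * ((X - C e) ^ i * C (n.choose i : ℂ)) := by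
          rw [hk (n - i), map_sub]
      _ = _ := by rw [map_pow, map_pow, hnc]; ring
  rw [Finset.sum_congr rfl hterm, Finset.sum_sub_distrib]
  have hA : ∑ i ∈ Finset.range (n + 1), (X - C e) ^ i * (C eb) ^ (n - i) * (n.choose i : ℂ[X])
      = (X - C s) ^ n := by
    have h := add_pow ((X : ℂ[X]) - C e) (C eb) n
    rw [show ((X : ℂ[X]) - C e + C eb) = X - C s from by
      rw [show (C s : ℂ[X]) = C e - C eb from by rw [← map_sub, heb]]; ring] at h
    exact h.symm
  have hB : ∑ i ∈ Finset.range (n + 1), (X - C e) ^ i * (C e) ^ (n - i) * (n.choose i : ℂ[X])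
      = X ^ n := by
    have h := add_pow ((X : ℂ[X]) - C e) (C e) n
    rw [show ((X : ℂ[X]) - C e + C e) = X from by ring] at h
    exact h.symm
  rw [hA, hB]

theorem stmt10 (n : ℕ) (hn : 1 ≤ n) :
    Rpol n =
      -(((rpol n).map (Int.castRingHom ℂ)).comp
        (X - C ((1 + Complex.I * (Real.sqrt 3 : ℂ)) / 2))) := by
  have ht : ((Real.sqrt 3 : ℂ)) ^ 2 = 3 := by
    norm_cast; exact Real.sq_sqrt (by norm_num)
  have hu : (Complex.I * (Real.sqrt 3 : ℂ)) ^ 2 = -3 := by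
    rw [mul_pow, Complex.I_sq, ht]; ring
  have hs0 : Complex.I * (Real.sqrt 3 : ℂ) ≠ 0 :=
    mul_ne_zero Complex.I_ne_zero
      (Complex.ofReal_ne_zero.mpr (by positivity))
  have hCs : (C (Complex.I * (Real.sqrt 3 : ℂ)) : ℂ[X]) ≠ 0 := by
    simpa using hs0
  apply mul_right_cancel₀ hCs
  have h1 : Rpol n * C (Complex.I * (Real.sqrt 3 : ℂ))
      = X ^ n - (X - C (Complex.I * (Real.sqrt 3 : ℂ))) ^ n := by
    have hr : Rpol n
        = ∑ i ∈ Finset.range n,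
            (X : ℂ[X]) ^ i * (X - C (Complex.I * (Real.sqrt 3 : ℂ))) ^ (n - 1 - i) :=
      Finset.sum_congr rfl fun i _ => mul_comm _ _
    have hg := geom_sum₂_mul (X : ℂ[X]) (X - C (Complex.I * (Real.sqrt 3 : ℂ))) n
    rw [sub_sub_cancel] at hg
    rw [hr]; exact hg
  have h2 := rcomp_gen (Complex.I * (Real.sqrt 3 : ℂ))
    ((1 + Complex.I * (Real.sqrt 3 : ℂ)) / 2) ((1 - Complex.I * (Real.sqrt 3 : ℂ)) / 2)
    (by ring)
    (fun k => by simpa using hkey_gen (Complex.I * (Real.sqrt 3 : ℂ)) hu k) n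
  rw [h1, neg_mul, h2]
  ring
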